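/- Let σ be an endomorphism of the free monoid X* (ℓ = |X|) that is k-bounded under iteration, and suppose its occurrence-count matrix M(σ) satisfies M(σ)^n = M(σ)^(n+1). Then σ itself stabilizes: σ^((k+1)ℓ) = σ^((k+1)ℓ+1) as maps on X*. -/

import Mathlib

/-- Number of occurrences of the variable `x` in a word of the free monoid. -/
def occFM {V : Type*} [DecidableEq V] (w : FreeMonoid V) (x : V) : ℕ :=
  (FreeMonoid.toList w).count x

/-!
A letter is mortal if some power of `σ` erases it. A path of descendants of length `ℓ = |X|`
repeats a letter, so it passes through a recurrent letter `u` (one occurring in `σ^c(u)`,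
`c ≥ 1`). Hence mortal letters are erased by `σ^ℓ`, and every non-mortal letter of `σ^ℓ(y)`
descends from a recurrent one. Write `σ^c(u) = p u q`: if `p q` were not mortal, the length of
`σ^(i c)(u)` would be at least `i`, against `k`-boundedness. Aperiodicity of `M(σ)` puts `u`
in both `σ^m(u)` and `σ^(m+1)(u)` for large `m`, which forces `u ∈ σ(u)`; so `σ(u) = p u q`
with `p q` mortal, `u` is its own only non-mortal descendant, and `σ^(j+1)(u) = σ^j(u)` for
`j ≥ ℓ`. Therefore `σ^(m+1) = σ^m` for `m ≥ 2ℓ`, which covers `(k+1)ℓ` when `k ≥ 1`; when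
`k = 0` every letter is erased in one step.
-/

open FreeMonoid

theorem pow_succ_eq_pow_of_le {M : Type*} [Monoid M] {a : M} {n m : ℕ} (h : a ^ n = a ^ (n + 1))
    (hnm : n ≤ m) : a ^ (m + 1) = a ^ m := by
  obtain ⟨d, rfl⟩ := Nat.exists_eq_add_of_le hnm
  rw [add_right_comm, pow_add, ← h, ← pow_add]

namespace FreeMonoid

variable {α β : Type*}

theorem mem_hom_apply_iff (φ : FreeMonoid α →* FreeMonoid β) (w : FreeMonoid α) (x : β) :
    x ∈ φ w ↔ ∃ t ∈ w, x ∈ φ (of t) := by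
  induction w using FreeMonoid.inductionOn' with
  | one => simp [notMem_one]
  | of_mul a w ih => simp [mem_mul, mem_of, ih, or_and_right, exists_or]

theorem hom_apply_eq_one_iff (φ : FreeMonoid α →* FreeMonoid β) (w : FreeMonoid α) :
    φ w = 1 ↔ ∀ t ∈ w, φ (of t) = 1 := by
  induction w using FreeMonoid.inductionOn' with
  | one => simp [notMem_one]
  | of_mul a w ih => simp [mem_mul, mem_of, ih, or_imp, forall_and]

theorem hom_apply_eq_of_forall_mem {M : Type*} [Monoid M] {φ ψ : FreeMonoid α →* M}
    {w : FreeMonoid α} (h : ∀ t ∈ w, φ (of t) = ψ (of t)) : φ w = ψ w := by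
  rw [← lift_restrict φ, ← lift_restrict ψ, lift_apply, lift_apply]
  exact congrArg List.prod (List.map_congr_left h)

theorem exists_eq_mul_of_mem {w : FreeMonoid α} {x : α} (h : x ∈ w) :
    ∃ p q : FreeMonoid α, w = p * of x * q := by
  obtain ⟨s, t, hst⟩ := List.append_of_mem h
  refine ⟨ofList s, ofList t, toList.injective ?_⟩
  rw [toList_mul, toList_mul, toList_ofList, toList_ofList, toList_of, List.append_assoc]
  exact hst

theorem exists_mem_of_ne_one {w : FreeMonoid α} (h : w ≠ 1) : ∃ x, x ∈ w :=
  List.exists_mem_of_ne_nil _ h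

-- `Monoid.End` carries its own coercion to functions, which `rw` does not match with that of `→*`.
theorem end_ext {φ ψ : Monoid.End (FreeMonoid α)} (h : ∀ x, φ (of x) = ψ (of x)) : φ = ψ :=
  hom_eq h

end FreeMonoid

section Occurrences

variable {α β : Type*} [DecidableEq α]

theorem occFM_mul (u v : FreeMonoid α) (x : α) : occFM (u * v) x = occFM u x + occFM v x :=
  List.count_append ..

theorem occFM_of (t x : α) : occFM (of t) x = if t = x then 1 else 0 := by
  simp [occFM, List.count_singleton]

theorem occFM_pos_iff {w : FreeMonoid α} {x : α} : 0 < occFM w x ↔ x ∈ w :=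
  List.count_pos_iff

theorem sum_occFM [Fintype α] (w : FreeMonoid α) : ∑ x, occFM w x = w.length := by
  simpa [occFM, FreeMonoid.length] using
    Multiset.sum_count_eq_card (m := (w.toList : Multiset α)) fun _ _ => Finset.mem_univ _

theorem occFM_hom_apply [Fintype α] [DecidableEq β] (φ : FreeMonoid α →* FreeMonoid β)
    (w : FreeMonoid α) (x : β) : occFM (φ w) x = ∑ t, occFM w t * occFM (φ (of t)) x := by
  induction w using FreeMonoid.inductionOn' with
  | one => simp [occFM]
  | of_mul a w ih => simp [occFM_mul, occFM_of, ih, add_mul, Finset.sum_add_distrib]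

variable [Fintype α]

def occMatrix : Monoid.End (FreeMonoid α) →* Matrix α α ℕ where
  toFun φ := Matrix.of fun x y => occFM (φ (of y)) x
  map_one' := by
    ext x y
    simp [occFM_of, Matrix.one_apply, eq_comm]
  map_mul' φ ψ := by
    ext x y
    rw [Matrix.mul_apply]
    exact (occFM_hom_apply φ (ψ (of y)) x).trans (Finset.sum_congr rfl fun _ _ => mul_comm _ _)

@[simp]
theorem occMatrix_apply (φ : Monoid.End (FreeMonoid α)) (x y : α) :
    occMatrix φ x y = occFM (φ (of y)) x := rfl

end Occurrences

namespace Substitution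

variable {α : Type*} (σ : Monoid.End (FreeMonoid α))

def Occurs (i : ℕ) (x y : α) : Prop := x ∈ (σ ^ i) (of y)

def Reaches (x y : α) : Prop := ∃ i, Occurs σ i x y

def IsRecurrent (y : α) : Prop := ∃ c, 0 < c ∧ Occurs σ c y y

def IsMortal (w : FreeMonoid α) : Prop := ∃ i, (σ ^ i) w = 1

variable {σ}

theorem pow_apply_pow_apply (a b : ℕ) (w : FreeMonoid α) :
    (σ ^ a) ((σ ^ b) w) = (σ ^ (a + b)) w := by
  rw [pow_add, Monoid.End.coe_mul, Function.comp_apply]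

theorem occurs_zero {x y : α} : Occurs σ 0 x y ↔ x = y := by
  simp [Occurs, mem_of]

theorem occurs_one {x y : α} : Occurs σ 1 x y ↔ x ∈ σ (of y) := by
  simp [Occurs]

theorem occurs_add {a b : ℕ} {x y : α} :
    Occurs σ (a + b) x y ↔ ∃ z, Occurs σ b z y ∧ Occurs σ a x z := by
  rw [Occurs, ← pow_apply_pow_apply]
  exact mem_hom_apply_iff (σ ^ a) _ x

theorem Occurs.trans {a b : ℕ} {x z y : α} (hzy : Occurs σ b z y) (hxz : Occurs σ a x z) :
    Occurs σ (a + b) x y :=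
  occurs_add.mpr ⟨z, hzy, hxz⟩

theorem Occurs.mul_self {c : ℕ} {y : α} (h : Occurs σ c y y) (m : ℕ) : Occurs σ (m * c) y y := by
  induction m with
  | zero => simp [occurs_zero]
  | succ m ih => rw [add_mul, one_mul]; exact h.trans ih

theorem Occurs.reaches {i : ℕ} {x y : α} (h : Occurs σ i x y) : Reaches σ x y := ⟨i, h⟩

theorem Reaches.refl (x : α) : Reaches σ x x := ⟨0, occurs_zero.mpr rfl⟩

theorem Reaches.trans {x y z : α} (hxy : Reaches σ x y) (hyz : Reaches σ y z) : Reaches σ x z :=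
  let ⟨_, ha⟩ := hxy
  let ⟨_, hb⟩ := hyz
  (hb.trans ha).reaches

theorem pow_apply_eq_one_of_le {i j : ℕ} {w : FreeMonoid α} (h : (σ ^ i) w = 1) (hij : i ≤ j) :
    (σ ^ j) w = 1 := by
  obtain ⟨d, rfl⟩ := Nat.exists_eq_add_of_le' hij
  rw [← pow_apply_pow_apply, h, map_one]

theorem IsMortal.of_mem {w : FreeMonoid α} {t : α} (hw : IsMortal σ w) (ht : t ∈ w) :
    IsMortal σ (of t) :=
  let ⟨i, hi⟩ := hw
  ⟨i, (hom_apply_eq_one_iff (σ ^ i) w).mp hi t ht⟩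

theorem IsMortal.of_mem_pow_apply {w : FreeMonoid α} {i : ℕ} {x : α} (hw : IsMortal σ w)
    (hx : x ∈ (σ ^ i) w) : IsMortal σ (of x) := by
  obtain ⟨j, hj⟩ := hw
  refine IsMortal.of_mem ⟨j, ?_⟩ hx
  rw [pow_apply_pow_apply, add_comm, ← pow_apply_pow_apply, hj, map_one]

theorem IsMortal.of_reaches {x y : α} (hy : IsMortal σ (of y)) (hxy : Reaches σ x y) :
    IsMortal σ (of x) :=
  let ⟨_, h⟩ := hxy
  hy.of_mem_pow_apply h

theorem IsRecurrent.not_isMortal {y : α} (hy : IsRecurrent σ y) : ¬ IsMortal σ (of y) := by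
  rintro ⟨i, hi⟩
  obtain ⟨c, hc, hcy⟩ := hy
  have hdead : (σ ^ (i * c)) (of y) = 1 :=
    pow_apply_eq_one_of_le hi (Nat.le_mul_of_pos_right i hc)
  have hself := hcy.mul_self i
  rw [Occurs, hdead] at hself
  exact notMem_one hself

theorem exists_isRecurrent_or_exists_card {j : ℕ} {x z : α} (h : Occurs σ j x z) :
    (∃ u, Reaches σ u z ∧ IsRecurrent σ u ∧ Reaches σ x u) ∨
      ∃ s : Finset α, s.card = j + 1 ∧ ∀ u ∈ s, Reaches σ u z ∧ Reaches σ x u := by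
  classical
  induction j generalizing x with
  | zero =>
    obtain rfl := occurs_zero.mp h
    exact Or.inr ⟨{x}, rfl, by simp [Reaches.refl]⟩
  | succ j ih =>
    obtain ⟨w, hwz, hxw⟩ := occurs_add.mp (add_comm j 1 ▸ h : Occurs σ (1 + j) x z)
    rcases ih hwz with ⟨u, huz, hu, hwu⟩ | ⟨s, hs, hmem⟩
    · exact Or.inl ⟨u, huz, hu, hxw.reaches.trans hwu⟩
    by_cases hx : x ∈ s
    · obtain ⟨hxz, b, hwx⟩ := hmem x hx
      exact Or.inl ⟨x, hxz, ⟨1 + b, by omega, hwx.trans hxw⟩, Reaches.refl x⟩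
    refine Or.inr ⟨insert x s, by rw [Finset.card_insert_of_notMem hx, hs], ?_⟩
    simp only [Finset.forall_mem_insert]
    exact ⟨⟨h.reaches, Reaches.refl x⟩,
      fun u hu => ⟨(hmem u hu).1, hxw.reaches.trans (hmem u hu).2⟩⟩

theorem le_length_pow_mul_apply {c : ℕ} {u : α} {p q : FreeMonoid α}
    (hσ : (σ ^ c) (of u) = p * of u * q) (hpq : ¬ IsMortal σ (p * q)) (i : ℕ) :
    i ≤ ((σ ^ (i * c)) (of u)).length := by
  induction i with
  | zero => exact Nat.zero_le _
  | succ i ih =>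
    have hpos : (σ ^ (i * c)) (p * q) ≠ 1 := fun h => hpq ⟨_, h⟩
    rw [Ne, ← length_eq_zero, map_mul, length_mul] at hpos
    rw [add_mul, one_mul, ← pow_apply_pow_apply, hσ, map_mul, map_mul, length_mul, length_mul]
    omega

theorem exists_eq_mul_of_occurs_self {c : ℕ} {u : α}
    (hbdd : ∃ B, ∀ i, ((σ ^ i) (of u)).length ≤ B) (h : Occurs σ c u u) :
    ∃ p q, (σ ^ c) (of u) = p * of u * q ∧ IsMortal σ (p * q) := by
  obtain ⟨p, q, hσ⟩ := exists_eq_mul_of_mem h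
  refine ⟨p, q, hσ, ?_⟩
  by_contra hpq
  obtain ⟨B, hB⟩ := hbdd
  have := le_length_pow_mul_apply hσ hpq (B + 1)
  have := hB ((B + 1) * c)
  omega

theorem eq_of_reaches_of_not_isMortal {u x : α} {p q : FreeMonoid α}
    (hσ : σ (of u) = p * of u * q) (hpq : IsMortal σ (p * q)) (hxu : Reaches σ x u)
    (hx : ¬ IsMortal σ (of x)) : x = u := by
  obtain ⟨d, hd⟩ := hxu
  induction d generalizing x with
  | zero => exact occurs_zero.mp hd
  | succ d ih =>
    obtain ⟨z, hzu, hxz⟩ := occurs_add.mp hd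
    rw [occurs_one, hσ, mem_mul, mem_mul, mem_of] at hzu
    rcases hzu with (hp | rfl) | hq
    · exact absurd ((hpq.of_mem (mem_mul.2 (Or.inl hp))).of_reaches hxz.reaches) hx
    · exact ih hx hxz
    · exact absurd ((hpq.of_mem (mem_mul.2 (Or.inr hq))).of_reaches hxz.reaches) hx

variable [Fintype α]

theorem exists_isRecurrent_of_occurs_card {x z : α} (h : Occurs σ (Fintype.card α) x z) :
    ∃ u, Reaches σ u z ∧ IsRecurrent σ u ∧ Reaches σ x u := by
  refine (exists_isRecurrent_or_exists_card h).resolve_right ?_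
  rintro ⟨s, hs, -⟩
  have := s.card_le_univ
  omega

theorem IsMortal.pow_card_apply {w : FreeMonoid α} (hw : IsMortal σ w) :
    (σ ^ Fintype.card α) w = 1 := by
  refine (hom_apply_eq_one_iff _ w).mpr fun t ht => ?_
  by_contra hne
  obtain ⟨x, hx⟩ := exists_mem_of_ne_one hne
  obtain ⟨u, hut, hu, -⟩ := exists_isRecurrent_of_occurs_card (σ := σ) hx
  exact hu.not_isMortal ((hw.of_mem ht).of_reaches hut)

variable [DecidableEq α] {n : ℕ}

theorem occurs_succ_iff (haper : occMatrix σ ^ n = occMatrix σ ^ (n + 1)) {m : ℕ} (hnm : n ≤ m)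
    {x y : α} : Occurs σ (m + 1) x y ↔ Occurs σ m x y := by
  have h : occMatrix (σ ^ (m + 1)) = occMatrix (σ ^ m) := by
    rw [map_pow, map_pow]
    exact pow_succ_eq_pow_of_le haper hnm
  have hxy := congrFun (congrFun h x) y
  rw [occMatrix_apply, occMatrix_apply] at hxy
  rw [Occurs, Occurs, ← occFM_pos_iff, ← occFM_pos_iff, hxy]

theorem IsRecurrent.occurs_one_self (haper : occMatrix σ ^ n = occMatrix σ ^ (n + 1))
    (hbdd : ∃ B, ∀ i y, ((σ ^ i) (of y)).length ≤ B) {u : α} (hu : IsRecurrent σ u) :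
    Occurs σ 1 u u := by
  obtain ⟨c, hc, hcu⟩ := hu
  have hnc : n ≤ n * c := Nat.le_mul_of_pos_right n hc
  obtain ⟨p, q, hσ, hpq⟩ :=
    exists_eq_mul_of_occurs_self (hbdd.imp fun _ hB i => hB i u) (hcu.mul_self n)
  have hsucc := (occurs_succ_iff haper hnc).mpr (hcu.mul_self n)
  rw [Occurs, pow_succ', Monoid.End.coe_mul, Function.comp_apply, hσ, map_mul, map_mul,
    mem_mul, mem_mul] at hsucc
  have hu_live : ¬ IsMortal σ (of u) := IsRecurrent.not_isMortal ⟨c, hc, hcu⟩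
  rcases hsucc with (hp | hu1) | hq
  · exact absurd (hpq.of_mem_pow_apply (i := 1) (by simpa using mem_mul.2 (Or.inl hp))) hu_live
  · exact occurs_one.mpr hu1
  · exact absurd (hpq.of_mem_pow_apply (i := 1) (by simpa using mem_mul.2 (Or.inr hq))) hu_live

theorem pow_succ_apply_of_occurs_card (haper : occMatrix σ ^ n = occMatrix σ ^ (n + 1))
    (hbdd : ∃ B, ∀ i y, ((σ ^ i) (of y)).length ≤ B) {j : ℕ} (hj : Fintype.card α ≤ j)
    {t y : α} (ht : Occurs σ (Fintype.card α) t y) : (σ ^ (j + 1)) (of t) = (σ ^ j) (of t) := by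
  by_cases ht_mortal : IsMortal σ (of t)
  · have hdead := ht_mortal.pow_card_apply
    rw [pow_apply_eq_one_of_le hdead (by omega), pow_apply_eq_one_of_le hdead hj]
  obtain ⟨u, -, hu, htu⟩ := exists_isRecurrent_of_occurs_card ht
  obtain ⟨p, q, hσ, hpq⟩ := exists_eq_mul_of_occurs_self (hbdd.imp fun _ hB i => hB i u)
    (hu.occurs_one_self haper hbdd)
  rw [pow_one] at hσ
  obtain rfl := eq_of_reaches_of_not_isMortal hσ hpq htu ht_mortal
  have hkill : (σ ^ j) (p * q) = 1 := pow_apply_eq_one_of_le hpq.pow_card_apply hj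
  rw [map_mul, mul_eq_one'] at hkill
  rw [pow_succ, Monoid.End.coe_mul, Function.comp_apply, hσ, map_mul, map_mul, hkill.1, hkill.2,
    one_mul, mul_one]

theorem pow_succ_eq_of_two_mul_card_le (haper : occMatrix σ ^ n = occMatrix σ ^ (n + 1))
    (hbdd : ∃ B, ∀ i y, ((σ ^ i) (of y)).length ≤ B) {m : ℕ} (hm : 2 * Fintype.card α ≤ m) :
    σ ^ (m + 1) = σ ^ m := by
  obtain ⟨j, hj, rfl⟩ : ∃ j, Fintype.card α ≤ j ∧ m = j + Fintype.card α :=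
    ⟨m - Fintype.card α, by omega, by omega⟩
  refine end_ext fun y => ?_
  rw [add_right_comm, ← pow_apply_pow_apply j, ← pow_apply_pow_apply (j + 1)]
  exact hom_apply_eq_of_forall_mem fun t ht => pow_succ_apply_of_occurs_card haper hbdd hj ht

end Substitution

open Substitution

/-- Let `σ` be an endomorphism of the free monoid over a finite variable set `V`
of size `ℓ`, `k`-bounded under iteration, whose occurrence-count matrix `M`
satisfies `M ^ n = M ^ (n+1)`. Then `σ` itself stabilizes:
`σ ^ ((k+1)·ℓ) = σ ^ ((k+1)·ℓ + 1)` as maps on the free monoid. -/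
theorem substitution_stabilizes {V : Type*} [Fintype V] [DecidableEq V]
    (σ : Monoid.End (FreeMonoid V)) (k n : ℕ)
    (hbound : ∀ i ≥ 1, ∀ x y : V, occFM ((σ ^ i) (FreeMonoid.of y)) x ≤ k)
    (M : Matrix V V ℕ)
    (hM : ∀ x y : V, M x y = occFM (σ (FreeMonoid.of y)) x)
    (haper : M ^ n = M ^ (n + 1)) :
    σ ^ ((k + 1) * Fintype.card V) = σ ^ ((k + 1) * Fintype.card V + 1) := by
  have hM' : occMatrix σ = M := Matrix.ext fun x y => (hM x y).symm
  have hlen : ∀ i ≥ 1, ∀ y, ((σ ^ i) (of y)).length ≤ Fintype.card V * k := fun i hi y => by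
    simpa [← sum_occFM] using Finset.sum_le_sum fun x (_ : x ∈ Finset.univ) => hbound i hi x y
  rcases Nat.eq_zero_or_pos k with rfl | hk
  · rw [zero_add, one_mul]
    refine end_ext fun y => ?_
    have hy : IsMortal σ (of y) := ⟨1, length_eq_zero.mp (by simpa using hlen 1 le_rfl y)⟩
    rw [hy.pow_card_apply, pow_apply_eq_one_of_le hy.pow_card_apply (Nat.le_succ _)]
  · have hbdd : ∃ B, ∀ i y, ((σ ^ i) (of y)).length ≤ B := ⟨Fintype.card V * k + 1, fun i y => by
      rcases Nat.eq_zero_or_pos i with rfl | hi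
      · simp [length_of]
      · exact (hlen i hi y).trans (Nat.le_succ _)⟩
    exact (pow_succ_eq_of_two_mul_card_le (hM' ▸ haper) hbdd (by nlinarith)).symm
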